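/- arXiv:2005.04123 — 5 statements merged into one kernel-verified Lean document; each statement's English description precedes it below -/
import Mathlib

section
/- A CNF formula B over variables Y expresses forgetting all variables but Y from A if and only if for every set of literals S over variables Y, the set S ∪ A is satisfiable exactly when S ∪ B is satisfiable. -/
abbrev Lit : Type := ℕ × Bool
abbrev Clause : Type := Finset Lit
abbrev Cnf : Type := Finset Clause

def Lit.negate (l : Lit) : Lit := (l.1, !l.2)

def litSat (M : ℕ → Bool) (l : Lit) : Prop := M l.1 = l.2

def clauseSat (M : ℕ → Bool) (c : Clause) : Prop := ∃ l ∈ c, litSat M l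

def cnfSat (M : ℕ → Bool) (F : Cnf) : Prop := ∀ c ∈ F, clauseSat M c

def ClTaut (c : Clause) : Prop := ∃ v : ℕ, (v, true) ∈ c ∧ (v, false) ∈ c

def cnfVars (F : Cnf) : Set ℕ := {v | ∃ c ∈ F, ∃ b, (v, b) ∈ c}

inductive PropForm : Type
  | tru : PropForm
  | fls : PropForm
  | var : ℕ → PropForm
  | neg : PropForm → PropForm
  | conj : PropForm → PropForm → PropForm
  | disj : PropForm → PropForm → PropForm

def PropForm.eval (M : ℕ → Bool) : PropForm → Bool
  | .tru => true
  | .fls => false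
  | .var n => M n
  | .neg φ => !(PropForm.eval M φ)
  | .conj φ ψ => PropForm.eval M φ && PropForm.eval M ψ
  | .disj φ ψ => PropForm.eval M φ || PropForm.eval M ψ

def PropForm.vars : PropForm → Set ℕ
  | .tru => ∅
  | .fls => ∅
  | .var n => {n}
  | .neg φ => PropForm.vars φ
  | .conj φ ψ => PropForm.vars φ ∪ PropForm.vars ψ
  | .disj φ ψ => PropForm.vars φ ∪ PropForm.vars ψ

def entailsForm (A : Cnf) (φ : PropForm) : Prop :=
  ∀ M, cnfSat M A → PropForm.eval M φ = true

/-- `B` expresses forgetting all variables but `Y` from `A`. -/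
def ForgetExpr (A : Cnf) (Y : Set ℕ) (B : Cnf) : Prop :=
  cnfVars B ⊆ Y ∧
    ∀ φ : PropForm, PropForm.vars φ ⊆ Y → (entailsForm A φ ↔ entailsForm B φ)

def litSetSat (M : ℕ → Bool) (S : Set Lit) : Prop := ∀ l ∈ S, litSat M l

/-!
Gluing assignments along the finitely many variables of `A` and `B` shows that a set `S` of
literals is satisfiable together with `A` iff `S` is consistent and its finite restriction `T`
to those variables is satisfiable with `A`, i.e. iff `A` does not entail `¬ ⋀ T`, a formula over
`Y`. Conversely, if `B ⊨ φ` fails at `M`, the literals over `Y` true in `M` are satisfiable with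
`B`, hence with `A`, by a model that agrees with `M` on `Y` and so refutes `A ⊨ φ`.
-/

lemma PropForm.eval_congr {φ : PropForm} {M M' : ℕ → Bool}
    (h : ∀ v ∈ φ.vars, M v = M' v) : φ.eval M = φ.eval M' := by
  induction φ with
  | tru | fls => rfl
  | var n => exact h n rfl
  | neg ψ ih => simp only [PropForm.eval, ih h]
  | conj ψ χ ih₁ ih₂ | disj ψ χ ih₁ ih₂ =>
      simp only [PropForm.eval, ih₁ fun v hv => h v (Or.inl hv), ih₂ fun v hv => h v (Or.inr hv)]

lemma cnfSat_congr {F : Cnf} {M M' : ℕ → Bool}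
    (h : ∀ v ∈ cnfVars F, M v = M' v) : cnfSat M F ↔ cnfSat M' F := by
  have hlit : ∀ c ∈ F, ∀ l ∈ c, litSat M l ↔ litSat M' l := fun c hc l hl => by
    rw [litSat, litSat, h l.1 ⟨c, hc, l.2, hl⟩]
  unfold cnfSat clauseSat
  exact forall₂_congr fun c hc => exists_congr fun l => and_congr_right (hlit c hc l)

lemma cnfVars_finite (F : Cnf) : (cnfVars F).Finite := by
  refine ((F.biUnion id).image Prod.fst).finite_toSet.subset ?_
  rintro v ⟨c, hc, b, hvb⟩
  exact Finset.mem_image.mpr ⟨(v, b), Finset.mem_biUnion.mpr ⟨c, hc, hvb⟩, rfl⟩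

def Lit.toForm (l : Lit) : PropForm := if l.2 then .var l.1 else .neg (.var l.1)

lemma Lit.eval_toForm (l : Lit) (M : ℕ → Bool) : l.toForm.eval M = true ↔ litSat M l := by
  obtain ⟨v, _ | _⟩ := l <;> simp [Lit.toForm, PropForm.eval, litSat]

def litsConj : List Lit → PropForm
  | [] => .tru
  | l :: L => .conj l.toForm (litsConj L)

lemma eval_litsConj (L : List Lit) (M : ℕ → Bool) :
    (litsConj L).eval M = true ↔ ∀ l ∈ L, litSat M l := by
  induction L with
  | nil => simp [litsConj, PropForm.eval]
  | cons l L ih => simp [litsConj, PropForm.eval, ih, Lit.eval_toForm]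

lemma vars_litsConj_subset (L : List Lit) : (litsConj L).vars ⊆ {v | ∃ l ∈ L, l.1 = v} := by
  induction L with
  | nil => exact Set.empty_subset _
  | cons l L ih =>
      rintro v (hv | hv)
      · refine ⟨l, List.mem_cons_self, ?_⟩
        obtain ⟨w, _ | _⟩ := l <;> exact hv.symm
      · obtain ⟨l', hl', rfl⟩ := ih hv
        exact ⟨l', List.mem_cons_of_mem _ hl', rfl⟩

lemma entailsForm_neg_litsConj_iff (F : Cnf) (L : List Lit) :
    entailsForm F (PropForm.neg (litsConj L)) ↔ ¬ ∃ M, (∀ l ∈ L, litSat M l) ∧ cnfSat M F := by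
  simp only [entailsForm, PropForm.eval, Bool.not_eq_true', not_exists, not_and]
  refine forall_congr' fun M => ?_
  rw [← Bool.not_eq_true, ← eval_litsConj]
  exact imp_not_comm

lemma exists_sat_iff_restrict (S : Set Lit) {V : Set ℕ} {F : Cnf} (hF : cnfVars F ⊆ V) :
    (∃ M, litSetSat M S ∧ cnfSat M F) ↔
      (∃ M, litSetSat M S) ∧ ∃ M, litSetSat M {l ∈ S | l.1 ∈ V} ∧ cnfSat M F := by
  classical
  constructor
  · rintro ⟨M, hS, hF⟩
    exact ⟨⟨M, hS⟩, M, fun l hl => hS l hl.1, hF⟩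
  · rintro ⟨⟨M₁, hM₁⟩, M₂, hM₂, hM₂F⟩
    refine ⟨fun v => if v ∈ V then M₂ v else M₁ v, fun l hl => ?_, ?_⟩
    · by_cases hlV : l.1 ∈ V
      · simpa [litSat, hlV] using hM₂ l ⟨hl, hlV⟩
      · simpa [litSat, hlV] using hM₁ l hl
    · exact (cnfSat_congr fun v hv => by simp [hF hv]).mp hM₂F

lemma entailsForm_imp_of_exists_sat_imp {A B : Cnf} {Y : Set ℕ}
    (h : ∀ S : Set Lit, (∀ l ∈ S, l.1 ∈ Y) →
      (∃ M, litSetSat M S ∧ cnfSat M B) → ∃ M, litSetSat M S ∧ cnfSat M A)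
    {φ : PropForm} (hφ : φ.vars ⊆ Y) (hA : entailsForm A φ) : entailsForm B φ := by
  intro M hMB
  obtain ⟨M', hM'Y, hM'A⟩ :=
    h {l | l.1 ∈ Y ∧ litSat M l} (fun l hl => hl.1) ⟨M, fun l hl => hl.2, hMB⟩
  have hagree : ∀ v ∈ φ.vars, M' v = M v := fun v hv => hM'Y (v, M v) ⟨hφ hv, rfl⟩
  rw [← PropForm.eval_congr hagree]
  exact hA M' hM'A

/-- `B` (over variables `Y`) expresses forgetting all variables but `Y` from
`A` iff for every set of literals `S` over `Y`, `S ∪ A` is satisfiable exactly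
when `S ∪ B` is satisfiable. -/
theorem stmt3 (A B : Cnf) (Y : Set ℕ) (hB : cnfVars B ⊆ Y) :
    ForgetExpr A Y B ↔
      ∀ S : Set Lit, (∀ l ∈ S, l.1 ∈ Y) →
        ((∃ M, litSetSat M S ∧ cnfSat M A) ↔
         (∃ M, litSetSat M S ∧ cnfSat M B)) := by
  constructor
  · rintro ⟨-, hforget⟩ S hSY
    set V := cnfVars A ∪ cnfVars B
    have hfin : {l ∈ S | l.1 ∈ V}.Finite :=
      (((cnfVars_finite A).union (cnfVars_finite B)).prod Set.finite_univ).subset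
        fun l hl => ⟨hl.2, trivial⟩
    obtain ⟨T, hT⟩ := hfin.exists_finset_coe
    have hvars : (litsConj T.toList).vars ⊆ Y := fun v hv => by
      obtain ⟨l, hl, rfl⟩ := vars_litsConj_subset _ hv
      exact hSY l (hT.symm ▸ Finset.mem_toList.mp hl : l ∈ {l ∈ S | l.1 ∈ V}).1
    have hrestrict : ∀ F : Cnf, cnfVars F ⊆ V → ((∃ M, litSetSat M S ∧ cnfSat M F) ↔
        (∃ M, litSetSat M S) ∧ ¬ entailsForm F (PropForm.neg (litsConj T.toList))) := by
      intro F hF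
      rw [exists_sat_iff_restrict S hF, entailsForm_neg_litsConj_iff, not_not, ← hT]
      simp [litSetSat]
    rw [hrestrict A Set.subset_union_left, hrestrict B Set.subset_union_right,
      hforget (PropForm.neg _) hvars]
  · intro h
    exact ⟨hB, fun φ hφ => ⟨entailsForm_imp_of_exists_sat_imp (fun S hS => (h S hS).2) hφ,
      entailsForm_imp_of_exists_sat_imp (fun S hS => (h S hS).1) hφ⟩⟩
end

section
/- If S is a set of literals over the variables Y such that S ∪ A is satisfiable but (S \ {l}) ∪ {¬l} ∪ A is unsatisfiable, then every CNF formula that expresses forgetting all variables but Y from A contains a clause containing the literal l. -/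
/-!
A model `M` of `S ∪ A` is a model of `B`, since every clause of `B` is a formula over `Y` entailed
by `B`, hence by `A`. If no clause of `B` contained `l`, flipping `l` in `M` would give a model of
`B` and of `(S \ {l}) ∪ {¬l}`. A model of `B` extends, off `Y`, to a model of `A`: otherwise `A`
would entail the clause over `Y ∩ Var(A)` falsified by it, and so would `B`. That model of `A`
satisfies `(S \ {l}) ∪ {¬l}`, contradicting the hypothesis.
-/

lemma litSat_update_of_fst_ne {M : ℕ → Bool} {v : ℕ} {b : Bool} {m : Lit} (h : m.1 ≠ v) :
    litSat (Function.update M v b) m ↔ litSat M m := by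
  rw [litSat, litSat, Function.update_of_ne h]

lemma litSat_update_negate (M : ℕ → Bool) (l : Lit) :
    litSat (Function.update M l.1 (!l.2)) l.negate := by
  simp [litSat, Lit.negate]

lemma Lit.fst_ne_of_litSat {M : ℕ → Bool} {l m : Lit} (hl : litSat M l) (hm : litSat M m)
    (hne : m ≠ l) : m.1 ≠ l.1 := fun h ↦ hne (Prod.ext h (by rw [← hm, h, hl]))

lemma clauseSat_update_negate {M : ℕ → Bool} {l : Lit} {c : Clause} (hl : litSat M l)
    (hlc : l ∉ c) (hc : clauseSat M c) : clauseSat (Function.update M l.1 (!l.2)) c := by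
  obtain ⟨m, hmc, hm⟩ := hc
  have hml : m ≠ l := by rintro rfl; exact hlc hmc
  exact ⟨m, hmc, (litSat_update_of_fst_ne (Lit.fst_ne_of_litSat hl hm hml)).mpr hm⟩

lemma cnfSat_update_negate {M : ℕ → Bool} {l : Lit} {F : Cnf} (hl : litSat M l)
    (hlF : ∀ c ∈ F, l ∉ c) (hF : cnfSat M F) : cnfSat (Function.update M l.1 (!l.2)) F :=
  fun c hc ↦ clauseSat_update_negate hl (hlF c hc) (hF c hc)

lemma litSetSat_update_negate {M : ℕ → Bool} {S : Set Lit} {l : Lit} (hS : litSetSat M S)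
    (hl : l ∈ S) : litSetSat (Function.update M l.1 (!l.2)) ((S \ {l}) ∪ {l.negate}) := by
  rintro m (⟨hmS, hml⟩ | rfl)
  · exact (litSat_update_of_fst_ne (Lit.fst_ne_of_litSat (hS l hl) (hS m hmS) hml)).mpr (hS m hmS)
  · exact litSat_update_negate M l

lemma cnfSat_of_agree {M N : ℕ → Bool} {F : Cnf} (hagree : ∀ c ∈ F, ∀ m ∈ c, N m.1 = M m.1)
    (hF : cnfSat M F) : cnfSat N F := by
  intro c hc
  obtain ⟨m, hmc, hm⟩ := hF c hc
  exact ⟨m, hmc, (hagree c hc m hmc).trans hm⟩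

def diffClause (M : ℕ → Bool) (V : Finset ℕ) : Clause := V.image fun v ↦ (v, !M v)

lemma clauseSat_diffClause_iff {M N : ℕ → Bool} {V : Finset ℕ} :
    clauseSat N (diffClause M V) ↔ ∃ v ∈ V, N v ≠ M v := by
  simp [clauseSat, diffClause, litSat, Bool.eq_not]

def litForm (m : Lit) : PropForm := if m.2 then .var m.1 else .neg (.var m.1)

lemma eval_litForm (M : ℕ → Bool) (m : Lit) : (litForm m).eval M = true ↔ litSat M m := by
  rcases m with ⟨v, _ | _⟩ <;> simp [litForm, litSat, PropForm.eval]

lemma vars_litForm (m : Lit) : (litForm m).vars = {m.1} := by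
  rcases m with ⟨v, _ | _⟩ <;> simp [litForm, PropForm.vars]

def PropForm.disjList : List PropForm → PropForm
  | [] => .fls
  | φ :: rest => .disj φ (disjList rest)

lemma PropForm.eval_disjList (M : ℕ → Bool) (L : List PropForm) :
    (disjList L).eval M = true ↔ ∃ φ ∈ L, φ.eval M = true := by
  induction L with
  | nil => simp [disjList, eval]
  | cons φ rest ih => simp [disjList, eval, ih]

lemma PropForm.vars_disjList (L : List PropForm) : (disjList L).vars ⊆ ⋃ φ ∈ L, φ.vars := by
  induction L with
  | nil => simp [disjList, vars]
  | cons φ rest ih =>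
    simp only [disjList, vars, List.mem_cons, Set.iUnion_iUnion_eq_or_left]
    exact Set.union_subset_union_right _ ih

noncomputable def clauseForm (c : Clause) : PropForm :=
  PropForm.disjList (c.toList.map litForm)

lemma eval_clauseForm (M : ℕ → Bool) (c : Clause) :
    (clauseForm c).eval M = true ↔ clauseSat M c := by
  simp only [clauseForm, PropForm.eval_disjList, List.mem_map, Finset.mem_toList, clauseSat]
  constructor
  · rintro ⟨_, ⟨m, hmc, rfl⟩, hm⟩
    exact ⟨m, hmc, (eval_litForm M m).mp hm⟩
  · rintro ⟨m, hmc, hm⟩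
    exact ⟨litForm m, ⟨m, hmc, rfl⟩, (eval_litForm M m).mpr hm⟩

lemma vars_clauseForm_subset {c : Clause} {Y : Set ℕ} (hc : ∀ m ∈ c, m.1 ∈ Y) :
    (clauseForm c).vars ⊆ Y := by
  refine (PropForm.vars_disjList _).trans (Set.iUnion₂_subset fun φ hφ ↦ ?_)
  obtain ⟨m, hm, rfl⟩ := List.mem_map.mp hφ
  simpa [vars_litForm] using hc m (Finset.mem_toList.mp hm)

lemma entailsForm_clauseForm_iff {A : Cnf} {c : Clause} :
    entailsForm A (clauseForm c) ↔ ∀ M, cnfSat M A → clauseSat M c := by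
  simp only [entailsForm, eval_clauseForm]

namespace ForgetExpr

variable {A B : Cnf} {Y : Set ℕ}

lemma entails_clause_iff (hB : ForgetExpr A Y B) {c : Clause} (hc : ∀ m ∈ c, m.1 ∈ Y) :
    (∀ M, cnfSat M A → clauseSat M c) ↔ ∀ M, cnfSat M B → clauseSat M c := by
  simpa only [entailsForm_clauseForm_iff] using hB.2 _ (vars_clauseForm_subset hc)

lemma cnfSat_of_cnfSat (hB : ForgetExpr A Y B) {M : ℕ → Bool} (hM : cnfSat M A) :
    cnfSat M B := fun c hc ↦
  (hB.entails_clause_iff fun m hm ↦ hB.1 ⟨c, hc, m.2, hm⟩).mpr (fun _ hN ↦ hN c hc) M hM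

lemma exists_cnfSat_eqOn (hB : ForgetExpr A Y B) {M : ℕ → Bool} (hM : cnfSat M B) :
    ∃ N, cnfSat N A ∧ ∀ v ∈ Y, N v = M v := by
  classical
  set V : Finset ℕ := (A.biUnion fun c ↦ c.image Prod.fst).filter (· ∈ Y)
  have hVY : ∀ m ∈ diffClause M V, m.1 ∈ Y := by
    simp only [diffClause, Finset.mem_image]
    rintro _ ⟨v, hv, rfl⟩
    exact (Finset.mem_filter.mp hv).2
  have hBc : ¬ ∀ N, cnfSat N B → clauseSat N (diffClause M V) := fun h ↦ by
    simpa [clauseSat_diffClause_iff] using h M hM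
  obtain ⟨N₀, hN₀A, hN₀c⟩ : ∃ N₀, cnfSat N₀ A ∧ ¬ clauseSat N₀ (diffClause M V) := by
    simpa using mt (hB.entails_clause_iff hVY).mp hBc
  simp only [clauseSat_diffClause_iff, not_exists, not_and, not_not] at hN₀c
  refine ⟨fun v ↦ if v ∈ Y then M v else N₀ v, cnfSat_of_agree (fun c hc m hm ↦ ?_) hN₀A,
    fun v hv ↦ if_pos hv⟩
  split_ifs with hmY
  · exact (hN₀c m.1 (Finset.mem_filter.mpr
      ⟨Finset.mem_biUnion.mpr ⟨c, hc, Finset.mem_image_of_mem _ hm⟩, hmY⟩)).symm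
  · rfl

end ForgetExpr

/-- If `S` is a set of literals over `Y` with `S ∪ A` satisfiable but
`(S \ {l}) ∪ {¬l} ∪ A` unsatisfiable, every formula expressing forgetting all
variables but `Y` from `A` contains a clause containing `l`. -/
theorem stmt9 (A : Cnf) (Y : Set ℕ) (S : Set Lit) (l : Lit)
    (hSY : ∀ m ∈ S, m.1 ∈ Y) (hl : l ∈ S)
    (hsat : ∃ M, litSetSat M S ∧ cnfSat M A)
    (hunsat : ¬ ∃ M, litSetSat M ((S \ {l}) ∪ {Lit.negate l}) ∧ cnfSat M A) :
    ∀ B : Cnf, ForgetExpr A Y B → ∃ c ∈ B, l ∈ c := by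
  intro B hB
  by_contra! hlB
  obtain ⟨M, hMS, hMA⟩ := hsat
  obtain ⟨N, hNA, hNY⟩ :=
    hB.exists_cnfSat_eqOn (cnfSat_update_negate (hMS l hl) hlB (hB.cnfSat_of_cnfSat hMA))
  refine hunsat ⟨N, fun m hm ↦ ?_, hNA⟩
  have hmY : m.1 ∈ Y := by
    rcases hm with ⟨hmS, -⟩ | rfl
    exacts [hSY m hmS, hSY l hl]
  rw [litSat, hNY m.1 hmY]
  exact litSetSat_update_negate hMS hl m hm
end

section
/- If a clause c of a CNF formula F is superirredundant, then c is contained in every minimal-size CNF formula equivalent to F. -/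
def isResolvent (c1 c2 r : Clause) (v : ℕ) : Prop :=
  (v, true) ∈ c1 ∧ (v, false) ∈ c2 ∧
    r = c1.erase (v, true) ∪ c2.erase (v, false)

inductive Deriv (F : Set Clause) : Clause → Prop
  | base {c : Clause} : c ∈ F → Deriv F c
  | step {c1 c2 r : Clause} {v : ℕ} : Deriv F c1 → Deriv F c2 →
      isResolvent c1 c2 r v → ¬ ClTaut r → Deriv F r

def ResCn (F : Set Clause) : Set Clause := {c | Deriv F c}

def setSat (M : ℕ → Bool) (S : Set Clause) : Prop := ∀ c ∈ S, clauseSat M c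

def setEntails (S : Set Clause) (c : Clause) : Prop :=
  ∀ M, setSat M S → clauseSat M c

def superRedundant (F : Cnf) (c : Clause) : Prop :=
  setEntails (ResCn ↑F \ {c}) c

def cnfSize (F : Cnf) : ℕ := ∑ c ∈ F, c.card

def cnfEquiv (F G : Cnf) : Prop := ∀ M, cnfSat M F ↔ cnfSat M G

/-
Resolution is complete for subsumption: every non-tautological clause `b` entailed by `F` contains
some clause of `ResCn F`. Given such a `b` for which no variable of `F` lies outside `b`, the
assignment falsifying `b` falsifies a clause of `F`, which must then be a subset of `b`; otherwise
pick a variable `v` of `F` not in `b`, find resolution consequences inside `b ∨ v` and `b ∨ ¬v` by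
induction on the number of such variables, and resolve them on `v`.

Now let `B` be a minimal formula equivalent to `F` with `c ∉ B`, and let `M` satisfy
`ResCn F \ {c}` but not `c`. Then `M` falsifies some `b ∈ B`, and the clause of `ResCn F` inside
`b` is falsified by `M`, so it is `c`. Replacing `b` by the strictly smaller `c` in `B` gives an
equivalent formula of smaller size.
-/

lemma ClTaut.mono {c d : Clause} (hcd : c ⊆ d) (hc : ClTaut c) : ClTaut d :=
  let ⟨v, ht, hf⟩ := hc
  ⟨v, hcd ht, hcd hf⟩

lemma clauseSat_mono {M : ℕ → Bool} {c d : Clause} (hcd : c ⊆ d) (hc : clauseSat M c) :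
    clauseSat M d :=
  let ⟨l, hl, hM⟩ := hc
  ⟨l, hcd hl, hM⟩

def clauseVars (c : Clause) : Finset ℕ := c.image Prod.fst

lemma clauseVars_insert (l : Lit) (c : Clause) :
    clauseVars (insert l c) = insert l.1 (clauseVars c) :=
  Finset.image_insert _ _ _

lemma not_clTaut_insert {v : ℕ} {s : Bool} {b : Clause} (hb : ¬ ClTaut b)
    (hv : v ∉ clauseVars b) : ¬ ClTaut (insert (v, s) b) := by
  rintro ⟨w, ht, hf⟩
  rw [Finset.mem_insert] at ht hf
  by_cases hwv : w = v
  · subst hwv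
    rcases ht with ht | ht
    · rcases hf with hf | hf
      · simp_all
      · exact hv (Finset.mem_image_of_mem Prod.fst hf)
    · exact hv (Finset.mem_image_of_mem Prod.fst ht)
  · have hw : ∀ t : Bool, (w, t) ≠ (v, s) := fun t h => hwv (congrArg Prod.fst h)
    exact hb ⟨w, ht.resolve_left (hw true), hf.resolve_left (hw false)⟩

def falsifier (b : Clause) (w : ℕ) : Bool := decide ((w, true) ∉ b)

lemma not_litSat_falsifier {b : Clause} (hb : ¬ ClTaut b) {l : Lit} (hl : l ∈ b) :
    ¬ litSat (falsifier b) l := by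
  obtain ⟨w, s⟩ := l
  cases s
  · simpa [litSat, falsifier] using fun ht => hb ⟨w, ht, hl⟩
  · simpa [litSat, falsifier] using hl

lemma not_clauseSat_falsifier {b : Clause} (hb : ¬ ClTaut b) : ¬ clauseSat (falsifier b) b :=
  fun ⟨_, hl, hsat⟩ => not_litSat_falsifier hb hl hsat

lemma mem_of_not_litSat_falsifier {b : Clause} {l : Lit} (hl : l.1 ∈ clauseVars b)
    (hsat : ¬ litSat (falsifier b) l) : l ∈ b := by
  obtain ⟨⟨w, s'⟩, hs', rfl : w = l.1⟩ := Finset.mem_image.1 hl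
  obtain ⟨_, s⟩ := l
  cases s <;> cases s' <;> simp_all [litSat, falsifier]

def cnfVarsOutside (F : Cnf) (b : Clause) : Finset ℕ := F.biUnion clauseVars \ clauseVars b

lemma cnfVarsOutside_insert (F : Cnf) (l : Lit) (b : Clause) :
    cnfVarsOutside F (insert l b) = (cnfVarsOutside F b).erase l.1 := by
  rw [cnfVarsOutside, clauseVars_insert, Finset.sdiff_insert, cnfVarsOutside]

lemma exists_mem_subset_of_cnfVarsOutside_eq_empty {F : Cnf} {b : Clause} (hb : ¬ ClTaut b)
    (hent : setEntails ↑F b) (hvars : cnfVarsOutside F b = ∅) : ∃ d ∈ F, d ⊆ b := by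
  have hsub : ∀ d ∈ F, clauseVars d ⊆ clauseVars b := fun d hd =>
    (Finset.subset_biUnion_of_mem clauseVars hd).trans (Finset.sdiff_eq_empty_iff_subset.1 hvars)
  have hF : ¬ cnfSat (falsifier b) F := fun h => not_clauseSat_falsifier hb (hent _ h)
  simp only [cnfSat, not_forall, exists_prop] at hF
  obtain ⟨d, hd, hdsat⟩ := hF
  exact ⟨d, hd, fun l hl => mem_of_not_litSat_falsifier
    (hsub d hd (Finset.mem_image_of_mem Prod.fst hl)) fun hlsat => hdsat ⟨l, hl, hlsat⟩⟩

lemma exists_deriv_subset_of_resolve {S : Set Clause} {b d₁ d₂ : Clause} {v : ℕ}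
    (hb : ¬ ClTaut b) (hd₁ : Deriv S d₁) (hd₂ : Deriv S d₂)
    (hd₁b : d₁ ⊆ insert (v, true) b) (hd₂b : d₂ ⊆ insert (v, false) b) :
    ∃ d, Deriv S d ∧ d ⊆ b := by
  by_cases hv₁ : (v, true) ∈ d₁
  · by_cases hv₂ : (v, false) ∈ d₂
    · have hres : d₁.erase (v, true) ∪ d₂.erase (v, false) ⊆ b :=
        Finset.union_subset (Finset.subset_insert_iff.1 hd₁b) (Finset.subset_insert_iff.1 hd₂b)
      exact ⟨_, hd₁.step hd₂ ⟨hv₁, hv₂, rfl⟩ fun h => hb (h.mono hres), hres⟩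
    · exact ⟨d₂, hd₂, (Finset.subset_insert_iff_of_notMem hv₂).1 hd₂b⟩
  · exact ⟨d₁, hd₁, (Finset.subset_insert_iff_of_notMem hv₁).1 hd₁b⟩

lemma setEntails_mono {S : Set Clause} {b b' : Clause} (hbb' : b ⊆ b') (h : setEntails S b) :
    setEntails S b' :=
  fun M hM => clauseSat_mono hbb' (h M hM)

theorem exists_deriv_subset_of_setEntails (F : Cnf) {b : Clause} (hb : ¬ ClTaut b)
    (hent : setEntails ↑F b) : ∃ d ∈ ResCn ↑F, d ⊆ b := by
  induction hn : (cnfVarsOutside F b).card generalizing b with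
  | zero =>
    obtain ⟨d, hd, hdb⟩ :=
      exists_mem_subset_of_cnfVarsOutside_eq_empty hb hent (Finset.card_eq_zero.1 hn)
    exact ⟨d, Deriv.base hd, hdb⟩
  | succ n ih =>
    obtain ⟨v, hv⟩ : (cnfVarsOutside F b).Nonempty := Finset.card_pos.1 (by omega)
    have hvb : v ∉ clauseVars b := (Finset.mem_sdiff.1 hv).2
    have hext : ∀ s : Bool, ∃ d ∈ ResCn ↑F, d ⊆ insert (v, s) b := fun s => by
      refine ih (not_clTaut_insert hb hvb) (setEntails_mono (Finset.subset_insert _ _) hent) ?_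
      rw [cnfVarsOutside_insert, Finset.card_erase_of_mem hv, hn, Nat.add_sub_cancel]
    obtain ⟨d₁, hd₁, hd₁b⟩ := hext true
    obtain ⟨d₂, hd₂, hd₂b⟩ := hext false
    exact exists_deriv_subset_of_resolve hb hd₁ hd₂ hd₁b hd₂b

lemma cnfSize_insert_erase_lt {B : Cnf} {b c : Clause} (hb : b ∈ B) (hc : c ∉ B) (hcb : c ⊂ b) :
    cnfSize (insert c (B.erase b)) < cnfSize B := by
  have hcard := Finset.card_lt_card hcb
  have hB := Finset.add_sum_erase B Finset.card hb
  rw [cnfSize, Finset.sum_insert fun h => hc (Finset.mem_of_mem_erase h), cnfSize, ← hB]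
  omega

lemma cnfEquiv.trans {F G H : Cnf} (hFG : cnfEquiv F G) (hGH : cnfEquiv G H) : cnfEquiv F H :=
  fun M => (hFG M).trans (hGH M)

lemma cnfEquiv_insert_erase {B : Cnf} {b c : Clause} (hcb : c ⊆ b)
    (hc : ∀ M, cnfSat M B → clauseSat M c) : cnfEquiv (insert c (B.erase b)) B := by
  intro M
  constructor
  · intro h d hd
    by_cases hdb : d = b
    · exact hdb ▸ clauseSat_mono hcb (h c (Finset.mem_insert_self _ _))
    · exact h d (Finset.mem_insert_of_mem (Finset.mem_erase.2 ⟨hdb, hd⟩))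
  · intro h d hd
    rcases Finset.mem_insert.1 hd with rfl | hd
    · exact hc M h
    · exact h d (Finset.mem_of_mem_erase hd)

theorem stmt10_general (F : Cnf) (c : Clause) (hc : c ∈ F)
    (hirr : ¬ superRedundant F c)
    (B : Cnf) (hBNT : ∀ d ∈ B, ¬ ClTaut d)
    (hequiv : cnfEquiv B F)
    (hmin : ∀ B' : Cnf, (∀ d ∈ B', ¬ ClTaut d) → cnfEquiv B' F →
      cnfSize B ≤ cnfSize B') :
    c ∈ B := by
  by_contra hcB
  obtain ⟨M, hM, hMc⟩ : ∃ M, setSat M (ResCn ↑F \ {c}) ∧ ¬ clauseSat M c := by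
    simpa only [superRedundant, setEntails, not_forall, exists_prop] using hirr
  obtain ⟨b, hbB, hMb⟩ : ∃ b ∈ B, ¬ clauseSat M b := by
    by_contra! h
    exact hMc ((hequiv M).1 h c hc)
  obtain ⟨d, hd, hcb⟩ := exists_deriv_subset_of_setEntails F (hBNT b hbB)
    fun M' hM' => (hequiv M').2 hM' b hbB
  obtain rfl : c = d := by
    by_contra hcd
    exact hMb (clauseSat_mono hcb (hM d ⟨hd, Ne.symm hcd⟩))
  have hB'NT : ∀ e ∈ insert c (B.erase b), ¬ ClTaut e := by
    intro e he
    rcases Finset.mem_insert.1 he with rfl | he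
    · exact fun h => hBNT b hbB (h.mono hcb)
    · exact hBNT e (Finset.mem_of_mem_erase he)
  have hB'equiv : cnfEquiv (insert c (B.erase b)) F :=
    (cnfEquiv_insert_erase hcb fun M' hB => (hequiv M').1 hB c hc).trans hequiv
  exact (hmin _ hB'NT hB'equiv).not_gt <| cnfSize_insert_erase_lt hbB hcB <|
    Finset.ssubset_iff_subset_ne.2 ⟨hcb, fun h => hcB (h ▸ hbB)⟩

/-- A superirredundant clause of `F` is contained in every minimal-size CNF
formula equivalent to `F`. -/
theorem stmt10 (F : Cnf) (c : Clause) (hc : c ∈ F)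
    (hNT : ∀ d ∈ F, ¬ ClTaut d)
    (hirr : ¬ superRedundant F c)
    (B : Cnf) (hBNT : ∀ d ∈ B, ¬ ClTaut d)
    (hequiv : cnfEquiv B F)
    (hmin : ∀ B' : Cnf, (∀ d ∈ B', ¬ ClTaut d) → cnfEquiv B' F →
      cnfSize B ≤ cnfSize B') :
    c ∈ B :=
  stmt10_general F c hc hirr B hBNT hequiv hmin
end

section
/- There exist two equivalent CNF formulae containing a common clause that is superredundant in one but superirredundant in the other; e.g., the clause {a} in F = {a, ¬a∨b, a∨¬b} versus F' = {a, b}. -/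
/-!
In `F = {a, ¬a ∨ b, a ∨ ¬b}` resolving `a` with `¬a ∨ b` gives `b`, and `b` with `a ∨ ¬b` resolves
back to `a`; so `a` follows from the resolution closure of `F` without `a`. The formula
`F' = {a, b}` has no negative literal, hence is its own resolution closure, and `{b}` does not
entail `a`.
-/

theorem clauseSat_insert {M : ℕ → Bool} {l : Lit} {c : Clause} :
    clauseSat M (insert l c) ↔ litSat M l ∨ clauseSat M c :=
  Finset.exists_mem_insert _ _ _

theorem clauseSat_singleton {M : ℕ → Bool} {l : Lit} : clauseSat M {l} ↔ litSat M l := by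
  simp [clauseSat]

theorem clauseSat_of_isResolvent {M : ℕ → Bool} {c1 c2 r : Clause} {v : ℕ}
    (h1 : clauseSat M c1) (h2 : clauseSat M c2) (hr : isResolvent c1 c2 r v) :
    clauseSat M r := by
  obtain ⟨-, -, rfl⟩ := hr
  obtain ⟨l1, hl1, hM1⟩ := h1
  obtain ⟨l2, hl2, hM2⟩ := h2
  cases hv : M v
  · refine ⟨l1, Finset.mem_union_left _ (Finset.mem_erase.2 ⟨?_, hl1⟩), hM1⟩
    rintro rfl
    simp [litSat, hv] at hM1
  · refine ⟨l2, Finset.mem_union_right _ (Finset.mem_erase.2 ⟨?_, hl2⟩), hM2⟩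
    rintro rfl
    simp [litSat, hv] at hM2

theorem setEntails_of_isResolvent {S : Set Clause} {c1 c2 r : Clause} {v : ℕ}
    (h1 : c1 ∈ S) (h2 : c2 ∈ S) (hr : isResolvent c1 c2 r v) : setEntails S r :=
  fun _ hM => clauseSat_of_isResolvent (hM c1 h1) (hM c2 h2) hr

theorem resCn_eq_self_of_forall_neg_not_mem {S : Set Clause}
    (hS : ∀ c ∈ S, ∀ v, (v, false) ∉ c) : ResCn S = S := by
  ext c
  refine ⟨fun hc => ?_, Deriv.base⟩
  induction hc with
  | base hc => exact hc
  | step _ _ hr _ _ ih₂ => exact absurd hr.2.1 (hS _ ih₂ _)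

-- The variables `a` and `b` of the example are `0` and `1`.
def clA : Clause := {(0, true)}
def clB : Clause := {(1, true)}
def clNotAOrB : Clause := {(0, false), (1, true)}
def clAOrNotB : Clause := {(0, true), (1, false)}

def cnfF : Cnf := {clA, clNotAOrB, clAOrNotB}
def cnfF' : Cnf := {clA, clB}

theorem not_clTaut_of_mem_cnfF {d : Clause} (hd : d ∈ cnfF) : ¬ ClTaut d := by
  simp only [cnfF, Finset.mem_insert, Finset.mem_singleton] at hd
  rcases hd with rfl | rfl | rfl <;> simp [ClTaut, clA, clNotAOrB, clAOrNotB]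

theorem not_clTaut_of_mem_cnfF' {d : Clause} (hd : d ∈ cnfF') : ¬ ClTaut d := by
  simp only [cnfF', Finset.mem_insert, Finset.mem_singleton] at hd
  rcases hd with rfl | rfl <;> simp [ClTaut, clA, clB]

theorem cnfEquiv_cnfF_cnfF' : cnfEquiv cnfF cnfF' := by
  intro M
  simp only [cnfSat, cnfF, cnfF', Finset.forall_mem_insert, Finset.mem_singleton, forall_eq,
    clA, clB, clNotAOrB, clAOrNotB, clauseSat_insert, clauseSat_singleton, litSat]
  cases M 0 <;> cases M 1 <;> decide

theorem isResolvent_clA_clNotAOrB : isResolvent clA clNotAOrB clB 0 :=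
  ⟨by simp [clA], by simp [clNotAOrB], by decide⟩

theorem isResolvent_clB_clAOrNotB : isResolvent clB clAOrNotB clA 1 :=
  ⟨by simp [clB], by simp [clAOrNotB], by decide⟩

theorem clB_mem_resCn_cnfF : clB ∈ ResCn ↑cnfF :=
  Deriv.step (Deriv.base (by simp [cnfF])) (Deriv.base (by simp [cnfF]))
    isResolvent_clA_clNotAOrB (by simp [ClTaut, clB])

theorem superRedundant_cnfF_clA : superRedundant cnfF clA :=
  setEntails_of_isResolvent ⟨clB_mem_resCn_cnfF, by decide⟩
    ⟨Deriv.base (by simp [cnfF]), by decide⟩ isResolvent_clB_clAOrNotB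

theorem not_superRedundant_cnfF'_clA : ¬ superRedundant cnfF' clA := by
  have hRes : ResCn ↑cnfF' = ↑cnfF' := resCn_eq_self_of_forall_neg_not_mem (by
    simp [cnfF', clA, clB])
  intro h
  have hB : setSat (fun n => n == 1) (ResCn ↑cnfF' \ {clA}) := by
    rintro d ⟨hd, hdA⟩
    rw [hRes] at hd
    simp only [cnfF', Finset.coe_insert, Finset.coe_singleton, Set.mem_insert_iff,
      Set.mem_singleton_iff] at hd hdA
    rcases hd with rfl | rfl
    · exact absurd rfl hdA
    · simp [clauseSat, litSat, clB]
  simpa [clauseSat, litSat, clA] using h _ hB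

/-- There exist two equivalent CNF formulae with a common clause that is
superredundant in one and superirredundant in the other. -/
theorem stmt12 :
    ∃ (F F' : Cnf) (c : Clause),
      (∀ d ∈ F, ¬ ClTaut d) ∧ (∀ d ∈ F', ¬ ClTaut d) ∧
      cnfEquiv F F' ∧ c ∈ F ∧ c ∈ F' ∧
      superRedundant F c ∧ ¬ superRedundant F' c :=
  ⟨cnfF, cnfF', clA, fun _ => not_clTaut_of_mem_cnfF, fun _ => not_clTaut_of_mem_cnfF',
    cnfEquiv_cnfF_cnfF', by simp [cnfF], by simp [cnfF'], superRedundant_cnfF_clA,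
    not_superRedundant_cnfF'_clA⟩
end

section
/- A clause c of a CNF formula F is superredundant if and only if (F \ {c}) ∪ resolve(c, F) entails c, where resolve(c, F) is the set of all non-tautological resolvents of c with clauses of F. -/
def resolveSet (c : Clause) (F : Cnf) : Set Clause :=
  {r : Clause | ∃ d ∈ F, ∃ v : ℕ,
    (isResolvent c d r v ∨ isResolvent d c r v) ∧ ¬ ClTaut r}

@[simp]
lemma Lit.negate_negate (l : Lit) : l.negate.negate = l := by
  simp [Lit.negate]

@[simp]
lemma litSat_negate {M : ℕ → Bool} {l : Lit} : litSat M l.negate ↔ ¬ litSat M l := by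
  cases h : M l.1 <;> cases l.2 <;> simp_all [litSat, Lit.negate]

lemma clTaut_of_mem_of_negate_mem {e : Clause} {l : Lit} (hl : l ∈ e) (hnl : l.negate ∈ e) :
    ClTaut e := by
  obtain ⟨v, _ | _⟩ := l
  · exact ⟨v, hnl, hl⟩
  · exact ⟨v, hl, hnl⟩

lemma clauseSat_of_clTaut (M : ℕ → Bool) {e : Clause} (h : ClTaut e) : clauseSat M e := by
  obtain ⟨v, htrue, hfalse⟩ := h
  cases hv : M v
  · exact ⟨(v, false), hfalse, hv⟩
  · exact ⟨(v, true), htrue, hv⟩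

lemma clauseSat_mono_s16 {M : ℕ → Bool} {e e' : Clause} (h : e ⊆ e') (he : clauseSat M e) :
    clauseSat M e' :=
  let ⟨l, hl, hsat⟩ := he
  ⟨l, h hl, hsat⟩

lemma clauseSat_erase_iff {M : ℕ → Bool} {e : Clause} {p : Lit} (hp : ¬ litSat M p) :
    clauseSat M (e.erase p) ↔ clauseSat M e := by
  refine ⟨clauseSat_mono_s16 (Finset.erase_subset p e), fun ⟨l, hl, hsat⟩ => ⟨l, ?_, hsat⟩⟩
  exact Finset.mem_erase.2 ⟨fun h => hp (h ▸ hsat), hl⟩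

lemma setEntails.mono {S T : Set Clause} {c : Clause} (h : setEntails S c) (hST : S ⊆ T) :
    setEntails T c :=
  fun M hM => h M fun d hd => hM d (hST hd)

lemma isResolvent.ne_left {c₁ c₂ r : Clause} {v : ℕ} (h : isResolvent c₁ c₂ r v)
    (h₂ : ¬ ClTaut c₂) : r ≠ c₁ := by
  obtain ⟨hv₁, hv₂, rfl⟩ := h
  intro hr
  rw [← hr, Finset.mem_union] at hv₁
  refine h₂ ⟨v, ?_, hv₂⟩
  rcases hv₁ with h | h
  · exact absurd rfl (Finset.mem_erase.1 h).1
  · exact Finset.mem_of_mem_erase h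

lemma isResolvent.ne_right {c₁ c₂ r : Clause} {v : ℕ} (h : isResolvent c₁ c₂ r v)
    (h₁ : ¬ ClTaut c₁) : r ≠ c₂ := by
  obtain ⟨hv₁, hv₂, rfl⟩ := h
  intro hr
  rw [← hr, Finset.mem_union] at hv₂
  refine h₁ ⟨v, hv₁, ?_⟩
  rcases hv₂ with h | h
  · exact Finset.mem_of_mem_erase h
  · exact absurd rfl (Finset.mem_erase.1 h).1

lemma resolveSet_subset_resCn_diff {F : Cnf} {c : Clause} (hc : c ∈ F)
    (hNT : ∀ d ∈ F, ¬ ClTaut d) : resolveSet c F ⊆ ResCn ↑F \ {c} := by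
  rintro r ⟨d, hd, v, hres, hr⟩
  rcases hres with hres | hres
  · exact ⟨Deriv.step (.base hc) (.base hd) hres hr, hres.ne_left (hNT d hd)⟩
  · exact ⟨Deriv.step (.base hd) (.base hc) hres hr, hres.ne_right (hNT d hd)⟩

lemma mem_resolveSet {F : Cnf} {c d : Clause} {q : Lit} (hd : d ∈ F) (hq : q ∈ c)
    (hnq : q.negate ∈ d) (hr : ¬ ClTaut (c.erase q ∪ d.erase q.negate)) :
    c.erase q ∪ d.erase q.negate ∈ resolveSet c F := by
  obtain ⟨v, _ | _⟩ := q
  · exact ⟨d, hd, v, Or.inr ⟨hnq, hq, Finset.union_comm _ _⟩, hr⟩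
  · exact ⟨d, hd, v, Or.inl ⟨hq, hnq, rfl⟩, hr⟩

def Guarded (M : ℕ → Bool) (c e : Clause) : Prop :=
  (¬ clauseSat M e → e = c) ∧
    ∀ l ∈ e, l.negate ∈ c → litSat M l → clauseSat M (e.erase l)

section Guarded

variable {M : ℕ → Bool} {F : Cnf} {c : Clause}

lemma guarded_of_mem (hM : setSat M ((↑F \ {c}) ∪ resolveSet c F)) (hMc : ¬ clauseSat M c)
    {d : Clause} (hd : d ∈ F) : Guarded M c d := by
  refine ⟨fun hMd => ?_, fun l hl hnl hMl => ?_⟩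
  · by_contra hdc
    exact hMd (hM d (Or.inl ⟨hd, hdc⟩))
  · by_contra hMd
    have hMr : ¬ clauseSat M (c.erase l.negate ∪ d.erase l.negate.negate) := by
      rintro ⟨m, hm, hMm⟩
      rcases Finset.mem_union.1 hm with hm | hm
      · exact hMc ⟨m, Finset.mem_of_mem_erase hm, hMm⟩
      · exact hMd ⟨m, by simpa using hm, hMm⟩
    have hr := mem_resolveSet hd hnl (by simpa using hl)
      (fun ht => hMr (clauseSat_of_clTaut M ht))
    exact hMr (hM _ (Or.inr hr))

lemma Guarded.resolvent {c₁ c₂ : Clause} {p : Lit}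
    (h₁ : Guarded M c c₁) (h₂ : Guarded M c c₂) (hp : p ∈ c₁) (hnp : p.negate ∈ c₂)
    (hMp : ¬ litSat M p) (hr : ¬ ClTaut (c₁.erase p ∪ c₂.erase p.negate)) :
    Guarded M c (c₁.erase p ∪ c₂.erase p.negate) := by
  set r := c₁.erase p ∪ c₂.erase p.negate
  have hc₁ : ¬ clauseSat M (c₁.erase p) → c₁ = c := fun h =>
    h₁.1 ((clauseSat_erase_iff hMp).not.1 h)
  refine ⟨fun hMr => ?_, fun l hl hnl hMl => ?_⟩
  · have hc₁c := hc₁ fun h => hMr (clauseSat_mono_s16 Finset.subset_union_left h)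
    exact absurd (h₂.2 _ hnp (by simpa [← hc₁c]) (litSat_negate.2 hMp))
      fun h => hMr (clauseSat_mono_s16 Finset.subset_union_right h)
  · by_contra hMr
    by_cases hl₁ : l ∈ c₁.erase p
    · have hMc₁ := (clauseSat_erase_iff hMp).2 (h₁.2 l (Finset.mem_of_mem_erase hl₁) hnl hMl)
      rw [Finset.erase_right_comm] at hMc₁
      exact hMr (clauseSat_mono_s16 (Finset.erase_subset_erase l Finset.subset_union_left) hMc₁)
    · have hsub : c₁.erase p ⊆ r.erase l := fun m hm =>
        Finset.mem_erase.2 ⟨fun hml => hl₁ (hml ▸ hm), Finset.subset_union_left hm⟩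
      have hc₁c := hc₁ fun h => hMr (clauseSat_mono_s16 hsub h)
      have hlp : l.negate ≠ p := by
        rintro rfl
        simp [r, hl₁] at hl
      have hnl' : l.negate ∈ r :=
        Finset.mem_of_mem_erase (hsub (Finset.mem_erase.2 ⟨hlp, hc₁c ▸ hnl⟩))
      exact hr (clTaut_of_mem_of_negate_mem hl hnl')

lemma guarded_of_deriv (hM : setSat M ((↑F \ {c}) ∪ resolveSet c F)) (hMc : ¬ clauseSat M c)
    {e : Clause} (he : Deriv ↑F e) : Guarded M c e := by
  induction he with
  | base hd => exact guarded_of_mem hM hMc hd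
  | @step c₁ c₂ r v _ _ hres hr ih₁ ih₂ =>
    obtain ⟨hv₁, hv₂, rfl⟩ := hres
    cases hMv : M v
    · exact ih₁.resolvent ih₂ hv₁ hv₂ (by simp [litSat, hMv]) hr
    · rw [Finset.union_comm] at hr ⊢
      exact ih₂.resolvent ih₁ hv₂ hv₁ (by simp [litSat, hMv]) hr

lemma setSat_resCn_diff (hM : setSat M ((↑F \ {c}) ∪ resolveSet c F))
    (hMc : ¬ clauseSat M c) : setSat M (ResCn ↑F \ {c}) := by
  rintro e ⟨he, hec⟩
  by_contra hMe
  exact hec ((guarded_of_deriv hM hMc he).1 hMe)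

end Guarded

/-- A clause `c` of `F` is superredundant iff `(F \ {c}) ∪ resolve(c, F)`
entails `c`. -/
theorem stmt16 (F : Cnf) (c : Clause) (hc : c ∈ F)
    (hNT : ∀ d ∈ F, ¬ ClTaut d) :
    superRedundant F c ↔
      setEntails (((↑F : Set Clause) \ {c}) ∪ resolveSet c F) c := by
  refine ⟨fun hSR M hM => ?_, fun hG => hG.mono ?_⟩
  · by_contra hMc
    exact hMc (hSR M (setSat_resCn_diff hM hMc))
  · rintro d (⟨hd, hdc⟩ | hd)
    · exact ⟨.base hd, hdc⟩
    · exact resolveSet_subset_resCn_diff hc hNT hd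
end
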